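/- Let W = m_1P_1 + ⋯ + m_sP_s be a fat point scheme in P^n with support X and slimming Y = (m_1−1)P_1 + ⋯ + (m_s−1)P_s. Then there exists i_0 ∈ ℕ such that (I_W)_i = (I_X · I_Y)_i for all i ≥ i_0. -/

import Mathlib

/-!
Let `M` be the irrelevant ideal and `P j` the ideal of the `j`-th point. Since `I_W` is
homogeneous and finitely generated, its elements of large degree lie in `M ^ N * I_W`.
Two distinct points have `M ≤ P j ⊔ P k`, so a prime containing `∑ j, ∏ k ≠ j, P k ^ m k`
but not `M` would contain at most one `P k`, hence miss one of the products. Thus some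
`M ^ N` lies in that sum, and
`M ^ N * I_W ≤ ∏ j, P j ^ m j = (∏ j, P j) * ∏ j, P j ^ (m j - 1) ≤ I_X * I_Y`.
-/

open MvPolynomial

/-- The homogeneous vanishing ideal of the `K`-rational point of `ℙ^n` with homogeneous
coordinates `v`. -/
noncomputable def pointIdeal {K : Type*} [Field K] {n : ℕ} (v : Fin (n + 1) → K) :
    Ideal (MvPolynomial (Fin (n + 1)) K) :=
  Ideal.span {F | (∃ d, F.IsHomogeneous d) ∧ MvPolynomial.eval v F = 0}

open scoped Matrix

attribute [local instance] MvPolynomial.gradedAlgebra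

namespace Ideal

theorem IsHomogeneous.pow {ι σ A : Type*} [CommSemiring A] [SetLike σ A] [AddSubmonoidClass σ A]
    [DecidableEq ι] [AddMonoid ι] {𝒜 : ι → σ} [GradedRing 𝒜] {I : Ideal A}
    (hI : I.IsHomogeneous 𝒜) (k : ℕ) : (I ^ k).IsHomogeneous 𝒜 := by
  induction k with
  | zero => rw [pow_zero, one_eq_top]; exact IsHomogeneous.top 𝒜
  | succ k ih => rw [pow_succ]; exact ih.mul hI

variable {R : Type*} [CommRing R] {ι : Type*} [Fintype ι]

theorem le_radical_sum_prod_erase [DecidableEq ι] [Nonempty ι] {M : Ideal R}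
    {q : ι → Ideal R} (h : ∀ j k, j ≠ k → M ≤ (q j ⊔ q k).radical) :
    M ≤ (∑ j, ∏ k ∈ Finset.univ.erase j, q k).radical := by
  rw [radical_eq_sInf]
  refine le_sInf fun p ⟨hle, hp⟩ => ?_
  by_contra hMp
  have hunique : ∀ j k, q j ≤ p → q k ≤ p → j = k := fun j k hj hk => by
    by_contra hjk
    exact hMp ((h j k hjk).trans (hp.radical_le_iff.2 (sup_le hj hk)))
  -- So `p` contains no factor of some product `∏ k ≠ j, q k`, hence not that product.
  obtain ⟨j, hj⟩ : ∃ j, ∀ k ∈ Finset.univ.erase j, ¬ q k ≤ p := by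
    by_cases hex : ∃ j, q j ≤ p
    · obtain ⟨j, hj⟩ := hex
      exact ⟨j, fun k hk hkp => Finset.ne_of_mem_erase hk (hunique k j hkp hj)⟩
    · push Not at hex
      exact ⟨Classical.arbitrary ι, fun k _ => hex k⟩
  rw [sum_eq_sup, Finset.sup_le_iff] at hle
  obtain ⟨k, hk, hkp⟩ := hp.prod_le.1 (hle j (Finset.mem_univ j))
  exact hj k hk hkp

theorem sup_le_radical_pow_sup_pow (I J : Ideal R) (a b : ℕ) :
    I ⊔ J ≤ (I ^ a ⊔ J ^ b).radical :=
  sup_le (fun _ hx => ⟨a, mem_sup_left (pow_mem_pow hx a)⟩)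
    (fun _ hx => ⟨b, mem_sup_right (pow_mem_pow hx b)⟩)

theorem exists_pow_mul_iInf_le_prod {M : Ideal R} (hM : M.FG) {q : ι → Ideal R}
    (h : ∀ j k, j ≠ k → M ≤ (q j ⊔ q k).radical) :
    ∃ N, M ^ N * ⨅ j, q j ≤ ∏ j, q j := by
  classical
  cases isEmpty_or_nonempty ι
  · exact ⟨0, by simp⟩
  obtain ⟨N, hN⟩ := exists_pow_le_of_le_radical_of_fg (le_radical_sum_prod_erase h) hM
  refine ⟨N, (mul_mono_left hN).trans ?_⟩
  rw [Finset.sum_mul, sum_eq_sup]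
  refine Finset.sup_le fun j _ => ?_
  calc (∏ k ∈ Finset.univ.erase j, q k) * ⨅ j, q j
      ≤ (∏ k ∈ Finset.univ.erase j, q k) * q j := mul_mono_right (iInf_le _ j)
    _ = ∏ j, q j := Finset.prod_erase_mul _ _ (Finset.mem_univ j)

end Ideal

section
variable {K : Type*} [Field K] {n : ℕ}

theorem mem_pointIdeal_of_isHomogeneous {v : Fin (n + 1) → K} {F : MvPolynomial (Fin (n + 1)) K}
    {d : ℕ} (hF : F.IsHomogeneous d) (hv : eval v F = 0) : F ∈ pointIdeal v :=
  Ideal.subset_span ⟨⟨d, hF⟩, hv⟩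

theorem pointIdeal_isHomogeneous (v : Fin (n + 1) → K) :
    (pointIdeal v).IsHomogeneous (homogeneousSubmodule (Fin (n + 1)) K) :=
  Ideal.homogeneous_span _ _ fun _ hF => hF.1.imp fun _ hd => (mem_homogeneousSubmodule _ _).2 hd

theorem idealOfVars_le_pointIdeal_sup {v w : Fin (n + 1) → K} (hvw : ∀ c : K, v ≠ c • w) :
    idealOfVars (Fin (n + 1)) K ≤ pointIdeal v ⊔ pointIdeal w := by
  have hv : v ∉ K ∙ w := fun h =>
    let ⟨c, hc⟩ := Submodule.mem_span_singleton.1 h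
    hvw c hc.symm
  obtain ⟨φ, hφv, hφw⟩ := Submodule.exists_dual_map_eq_bot_of_notMem hv inferInstance
  have hφw : φ w = 0 := by
    simpa [hφw] using Submodule.mem_map_of_mem (f := φ) (Submodule.mem_span_singleton_self w)
  -- `B` is the projection onto `K ∙ v` along `ker φ`; `1 - B` kills `v` and `B` kills `w`.
  set B := LinearMap.toMatrix' ((φ v)⁻¹ • φ.smulRight v)
  have hBv : B *ᵥ v = v := by
    rw [LinearMap.toMatrix'_mulVec, LinearMap.smul_apply, LinearMap.smulRight_apply, smul_smul,
      inv_mul_cancel₀ hφv, one_smul]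
  have hBw : B *ᵥ w = 0 := by
    rw [LinearMap.toMatrix'_mulVec, LinearMap.smul_apply, LinearMap.smulRight_apply, hφw,
      zero_smul, smul_zero]
  refine Ideal.span_le.2 ?_
  rintro _ ⟨i, rfl⟩
  have hX : X i = (1 - B).toMvPolynomial i + B.toMvPolynomial i := by
    rw [← Pi.add_apply, ← Matrix.toMvPolynomial_add, sub_add_cancel, Matrix.toMvPolynomial_one]
  rw [SetLike.mem_coe, hX]
  refine Submodule.add_mem_sup ?_ ?_ <;>
    refine mem_pointIdeal_of_isHomogeneous (Matrix.toMvPolynomial_isHomogeneous _ _) ?_ <;>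
    simp [Matrix.toMvPolynomial_eval_eq_apply, Matrix.sub_mulVec, hBv, hBw]

end

namespace MvPolynomial
variable {σ R : Type*} [CommRing R]

theorem IsHomogeneous.mem_pow_idealOfVars {F : MvPolynomial σ R} {i N : ℕ}
    (hF : F.IsHomogeneous i) (hN : N ≤ i) : F ∈ idealOfVars σ R ^ N :=
  (mem_pow_idealOfVars_iff N F).2 fun x hx => by
    rwa [Finsupp.degree_eq_weight_one, ← Pi.one_def, hF (mem_support_iff.1 hx)]

theorem homogeneousComponent_mul_of_isHomogeneous {f g : MvPolynomial σ R} {e i : ℕ}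
    (hg : g.IsHomogeneous e) (hei : e ≤ i) :
    homogeneousComponent i (f * g) = homogeneousComponent (i - e) f * g := by
  have := DirectSum.coe_decompose_mul_of_right_mem_of_le (homogeneousSubmodule σ R)
    (a := f) ((mem_homogeneousSubmodule e g).2 hg) hei
  rwa [← decomposition.decompose'_apply, ← decomposition.decompose'_apply]

theorem exists_mem_pow_idealOfVars_mul_of_isHomogeneous {I : Ideal (MvPolynomial σ R)}
    (hI : I.IsHomogeneous (homogeneousSubmodule σ R)) (hfg : I.FG) (N : ℕ) :
    ∃ D, ∀ i ≥ D, ∀ F ∈ I, F.IsHomogeneous i → F ∈ idealOfVars σ R ^ N * I := by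
  obtain ⟨T, hT⟩ := hfg
  refine ⟨N + T.sup totalDegree, fun i hi F hFI hF => ?_⟩
  obtain ⟨f, -, rfl⟩ := Submodule.mem_span_finset.1 (hT ▸ hFI)
  -- The degree-`i` part of `f t * t` is `∑ e, (f t)_(i - e) * t_e`, and `i - e ≥ N`.
  rw [← homogeneousComponent_eq_self hF, map_sum]
  refine Ideal.sum_mem _ fun t ht => ?_
  have htI : t ∈ I := hT ▸ Ideal.subset_span ht
  rw [smul_eq_mul, ← sum_homogeneousComponent t, Finset.mul_sum, map_sum]
  refine Ideal.sum_mem _ fun e he => ?_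
  have hei : e + N ≤ i := by
    have := Finset.le_sup (f := totalDegree) ht
    have := Finset.mem_range.1 he
    omega
  rw [homogeneousComponent_mul_of_isHomogeneous (homogeneousComponent_isHomogeneous e t) (by omega)]
  exact Ideal.mul_mem_mul
    ((homogeneousComponent_isHomogeneous _ _).mem_pow_idealOfVars (by omega))
    (homogeneousComponent_mem_of_mem hI htI e)

end MvPolynomial

theorem fatPoint_eq_support_mul_slimming_in_large_degrees_general {K : Type*} [Field K]
    (n s : ℕ)
    (v : Fin s → (Fin (n + 1) → K))
    (hdist : ∀ i j, i ≠ j → ∀ c : K, v i ≠ c • v j)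
    (m : Fin s → ℕ) (hm : ∀ j, 1 ≤ m j) :
    ∃ i₀ : ℕ, ∀ i ≥ i₀, ∀ F : MvPolynomial (Fin (n + 1)) K, F.IsHomogeneous i →
      (F ∈ (⨅ j, (pointIdeal (v j)) ^ (m j)) ↔
        F ∈ (⨅ j, pointIdeal (v j)) * (⨅ j, (pointIdeal (v j)) ^ (m j - 1))) := by
  set P := fun j => pointIdeal (v j)
  have hpow (j : Fin s) : P j * P j ^ (m j - 1) = P j ^ m j :=
    mul_pow_sub_one (Nat.one_le_iff_ne_zero.1 (hm j)) _
  have hle : (⨅ j, P j) * (⨅ j, P j ^ (m j - 1)) ≤ ⨅ j, P j ^ m j :=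
    le_iInf fun j => (Ideal.mul_mono (iInf_le _ j) (iInf_le _ j)).trans (hpow j).le
  have hprod : ∏ j, P j ^ m j ≤ (⨅ j, P j) * (⨅ j, P j ^ (m j - 1)) := by
    simp only [← hpow, Finset.prod_mul_distrib, ← Finset.inf_univ_eq_iInf]
    exact Ideal.mul_mono Ideal.prod_le_inf Ideal.prod_le_inf
  obtain ⟨N, hN⟩ := Ideal.exists_pow_mul_iInf_le_prod (idealOfVars_fg (Fin (n + 1)) K)
    fun j k hjk => (idealOfVars_le_pointIdeal_sup (hdist j k hjk)).trans
      (Ideal.sup_le_radical_pow_sup_pow _ _ (m j) (m k))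
  obtain ⟨D, hD⟩ := exists_mem_pow_idealOfVars_mul_of_isHomogeneous
    (Ideal.IsHomogeneous.iInf fun j => (pointIdeal_isHomogeneous (v j)).pow (m j))
    (IsNoetherian.noetherian _) N
  exact ⟨D, fun i hi F hF =>
    ⟨fun hFW => hprod (hN (hD i hi F hFW hF)), fun hFXY => hle hFXY⟩⟩

/-- Let `W = m_1 P_1 + ⋯ + m_s P_s` be a fat point scheme in `ℙ^n` with
support `X` and slimming `Y = (m_1 - 1) P_1 + ⋯ + (m_s - 1) P_s`. Then there exists
`i₀ ∈ ℕ` such that `(I_W)_i = (I_X · I_Y)_i` for all `i ≥ i₀`. -/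
theorem fatPoint_eq_support_mul_slimming_in_large_degrees {K : Type*} [Field K]
    (n s : ℕ) (hs : 0 < s)
    (v : Fin s → (Fin (n + 1) → K))
    (hv0 : ∀ j, v j ≠ 0)
    (hdist : ∀ i j, i ≠ j → ∀ c : K, v i ≠ c • v j)
    (m : Fin s → ℕ) (hm : ∀ j, 1 ≤ m j) :
    ∃ i₀ : ℕ, ∀ i ≥ i₀, ∀ F : MvPolynomial (Fin (n + 1)) K, F.IsHomogeneous i →
      (F ∈ (⨅ j, (pointIdeal (v j)) ^ (m j)) ↔
        F ∈ (⨅ j, pointIdeal (v j)) * (⨅ j, (pointIdeal (v j)) ^ (m j - 1))) :=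
  fatPoint_eq_support_mul_slimming_in_large_degrees_general n s v hdist m hm
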